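/- Let 𝕏 ⊂ ℝ^p be compact. For every continuous function u: 𝕏 → ℝ and every ε > 0, there exist n ∈ ℕ, weights π_z > 0 summing to 1, means μ_z ∈ ℝ^p, symmetric positive-definite matrices Σ_z, and scalars a_z ∈ ℝ such that sup_{x∈𝕏} |u(x) − Σ_{z=1}^{n} [π_z φ_p(x; μ_z, Σ_z)/Σ_ζ π_ζ φ_p(x; μ_ζ, Σ_ζ)]·a_z| < ε. -/

import Mathlib

open scoped Matrix BigOperators

/-- The multivariate Gaussian density. -/
noncomputable def gaussPDF {ι : Type*} [Fintype ι] [DecidableEq ι] (μ : ι → ℝ)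
    (S : Matrix ι ι ℝ) (x : ι → ℝ) : ℝ :=
  (Real.sqrt ((2 * Real.pi) ^ (Fintype.card ι) * S.det))⁻¹ *
    Real.exp (-(1 / 2) * ((x - μ) ⬝ᵥ (S⁻¹ *ᵥ (x - μ))))

/-!
With identity covariance, `φ(x; μ, I) = φ(x; 0, I) · exp(⟨x, μ⟩ - |μ|²/2)`. The common factor
`φ(x; 0, I)` cancels in the normalization, so choosing `π_z ∝ d_z exp(|μ_z|²/2)` and
`a_z = b_z / d_z`, the network is exactly the ratio of exponential sums
`∑ b_z exp⟨x, μ_z⟩ / ∑ d_z exp⟨x, μ_z⟩` with `d_z > 0`. These ratios form a subalgebra of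
`C(𝕏, ℝ)`: sums and products of such ratios are again ratios over the product index set, since
`exp⟨x, μ⟩ exp⟨x, μ'⟩ = exp⟨x, μ + μ'⟩`. It contains the constants and the sigmoids
`x ↦ σ(⟨x, v⟩)`, which separate points, so it is dense by Stone–Weierstrass.
-/

open Matrix

section ExpSum

variable {m ι κ : Type*} [Fintype m] [Fintype ι] [Fintype κ]

noncomputable def expSum (c : ι → ℝ) (μ : ι → m → ℝ) (x : m → ℝ) : ℝ :=
  ∑ i, c i * Real.exp (x ⬝ᵥ μ i)

lemma expSum_pos [Nonempty ι] {c : ι → ℝ} (hc : ∀ i, 0 < c i) (μ : ι → m → ℝ) (x : m → ℝ) :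
    0 < expSum c μ x :=
  Finset.sum_pos (fun i _ => mul_pos (hc i) (Real.exp_pos _)) Finset.univ_nonempty

lemma expSum_add (c c' : ι → ℝ) (μ : ι → m → ℝ) (x : m → ℝ) :
    expSum (c + c') μ x = expSum c μ x + expSum c' μ x := by
  simp only [expSum, Pi.add_apply, add_mul, Finset.sum_add_distrib]

lemma expSum_mul_expSum (c : ι → ℝ) (c' : κ → ℝ) (μ : ι → m → ℝ) (μ' : κ → m → ℝ)
    (x : m → ℝ) :
    expSum c μ x * expSum c' μ' x =
      expSum (fun k : ι × κ => c k.1 * c' k.2) (fun k => μ k.1 + μ' k.2) x := by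
  simp only [expSum, Finset.sum_mul_sum, Fintype.sum_prod_type, dotProduct_add, Real.exp_add]
  refine Finset.sum_congr rfl fun i _ => Finset.sum_congr rfl fun j _ => ?_
  ring

lemma expSum_comp_equiv (e : κ ≃ ι) (c : ι → ℝ) (μ : ι → m → ℝ) (x : m → ℝ) :
    expSum (c ∘ e) (μ ∘ e) x = expSum c μ x :=
  e.sum_comp fun i => c i * Real.exp (x ⬝ᵥ μ i)

end ExpSum

section ExpRatio

variable {m : Type*} [Fintype m] {K : Set (m → ℝ)}

def IsExpRatio (K : Set (m → ℝ)) (g : K → ℝ) : Prop :=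
  ∃ (ι : Type) (_ : Fintype ι) (_ : Nonempty ι) (b d : ι → ℝ) (μ : ι → m → ℝ),
    (∀ i, 0 < d i) ∧ ∀ x : K, g x = expSum b μ x / expSum d μ x

lemma isExpRatio_const (r : ℝ) : IsExpRatio K fun _ => r :=
  ⟨Unit, inferInstance, inferInstance, fun _ => r, fun _ => 1, fun _ => 0, fun _ => one_pos,
    fun x => by simp [expSum]⟩

lemma IsExpRatio.mul {g g' : K → ℝ} (hg : IsExpRatio K g) (hg' : IsExpRatio K g') :
    IsExpRatio K (g * g') := by
  obtain ⟨ι, _, _, b, d, μ, hd, hg⟩ := hg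
  obtain ⟨κ, _, _, b', d', μ', hd', hg'⟩ := hg'
  refine ⟨ι × κ, inferInstance, inferInstance, fun k => b k.1 * b' k.2,
    fun k => d k.1 * d' k.2, fun k => μ k.1 + μ' k.2, fun k => mul_pos (hd _) (hd' _),
    fun x => ?_⟩
  rw [Pi.mul_apply, hg, hg', div_mul_div_comm, expSum_mul_expSum, expSum_mul_expSum]

lemma IsExpRatio.add {g g' : K → ℝ} (hg : IsExpRatio K g) (hg' : IsExpRatio K g') :
    IsExpRatio K (g + g') := by
  obtain ⟨ι, _, _, b, d, μ, hd, hg⟩ := hg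
  obtain ⟨κ, _, _, b', d', μ', hd', hg'⟩ := hg'
  refine ⟨ι × κ, inferInstance, inferInstance, fun k => b k.1 * d' k.2 + d k.1 * b' k.2,
    fun k => d k.1 * d' k.2, fun k => μ k.1 + μ' k.2, fun k => mul_pos (hd _) (hd' _),
    fun x => ?_⟩
  rw [Pi.add_apply, hg, hg', div_add_div _ _ (expSum_pos hd μ x).ne' (expSum_pos hd' μ' x).ne',
    expSum_mul_expSum, expSum_mul_expSum, expSum_mul_expSum, ← expSum_add]
  rfl

lemma IsExpRatio.exists_fin {g : K → ℝ} (hg : IsExpRatio K g) :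
    ∃ (n : ℕ) (b d : Fin n → ℝ) (μ : Fin n → m → ℝ),
      0 < n ∧ (∀ i, 0 < d i) ∧ ∀ x : K, g x = expSum b μ x / expSum d μ x := by
  obtain ⟨ι, _, _, b, d, μ, hd, hg⟩ := hg
  let e := (Fintype.equivFin ι).symm
  exact ⟨Fintype.card ι, b ∘ e, d ∘ e, μ ∘ e, Fintype.card_pos, fun i => hd (e i),
    fun x => by rw [expSum_comp_equiv, expSum_comp_equiv, hg]⟩

lemma isExpRatio_sigmoid_dotProduct (v : m → ℝ) :
    IsExpRatio K fun x => Real.sigmoid ((x : m → ℝ) ⬝ᵥ v) := by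
  refine ⟨Fin 2, inferInstance, inferInstance, ![1, 0], ![1, 1], ![0, -v],
    fun i => by fin_cases i <;> simp, fun x => ?_⟩
  simp [expSum, Real.sigmoid_def, Fin.sum_univ_two]

variable (K) in
def expRatioSubalgebra : Subalgebra ℝ C(K, ℝ) where
  carrier := {g | IsExpRatio K g}
  mul_mem' := IsExpRatio.mul
  add_mem' := IsExpRatio.add
  algebraMap_mem' := isExpRatio_const

lemma expRatioSubalgebra_separatesPoints : (expRatioSubalgebra K).SeparatesPoints := by
  intro x y hxy
  let v := (x : m → ℝ) - y
  have hv : v ≠ 0 := sub_ne_zero.mpr (Subtype.coe_ne_coe.mpr hxy)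
  refine ⟨_, ⟨⟨fun z => Real.sigmoid ((z : m → ℝ) ⬝ᵥ v), by fun_prop⟩,
    isExpRatio_sigmoid_dotProduct v, rfl⟩, fun h => hv ?_⟩
  have : v ⬝ᵥ v = 0 := by
    rw [sub_dotProduct, Real.sigmoid_injective h, sub_self]
  exact dotProduct_self_eq_zero.mp this

end ExpRatio

lemma sum_div_sum_mul_of_eq_mul {ι : Type*} [Fintype ι] {f w : ι → ℝ} {K : ℝ} (hK : K ≠ 0)
    (hf : ∀ z, f z = K * w z) (a : ι → ℝ) :
    ∑ z, f z / (∑ ζ, f ζ) * a z = (∑ z, w z * a z) / ∑ ζ, w ζ := by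
  simp only [hf, ← Finset.mul_sum, mul_div_mul_left _ _ hK, Finset.sum_div, div_mul_eq_mul_div]

section Gaussian

variable {m ι : Type*} [Fintype m] [Fintype ι]

lemma gaussPDF_pos [DecidableEq m] (μ : m → ℝ) {S : Matrix m m ℝ} (hS : 0 < S.det)
    (x : m → ℝ) : 0 < gaussPDF μ S x := by
  unfold gaussPDF
  have : 0 < (2 * Real.pi) ^ Fintype.card m * S.det := by positivity
  positivity

lemma gaussPDF_one_eq [DecidableEq m] (μ x : m → ℝ) :
    gaussPDF μ 1 x = gaussPDF 0 1 x * Real.exp (x ⬝ᵥ μ - μ ⬝ᵥ μ / 2) := by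
  simp only [gaussPDF, det_one, inv_one, one_mulVec, sub_zero, mul_assoc, ← Real.exp_add]
  congr 2
  simp only [dotProduct_sub, sub_dotProduct, dotProduct_comm μ x]
  ring

noncomputable def gaussWeight (d : ι → ℝ) (μ : ι → m → ℝ) (z : ι) : ℝ :=
  d z * Real.exp (μ z ⬝ᵥ μ z / 2) / ∑ ζ, d ζ * Real.exp (μ ζ ⬝ᵥ μ ζ / 2)

variable {d : ι → ℝ}

lemma sum_mul_exp_pos [Nonempty ι] (hd : ∀ z, 0 < d z) (μ : ι → m → ℝ) :
    0 < ∑ ζ, d ζ * Real.exp (μ ζ ⬝ᵥ μ ζ / 2) :=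
  Finset.sum_pos (fun ζ _ => mul_pos (hd ζ) (Real.exp_pos _)) Finset.univ_nonempty

lemma gaussWeight_pos (hd : ∀ z, 0 < d z) (μ : ι → m → ℝ) (z : ι) : 0 < gaussWeight d μ z :=
  have : Nonempty ι := ⟨z⟩
  div_pos (mul_pos (hd z) (Real.exp_pos _)) (sum_mul_exp_pos hd μ)

lemma sum_gaussWeight [Nonempty ι] (hd : ∀ z, 0 < d z) (μ : ι → m → ℝ) :
    ∑ z, gaussWeight d μ z = 1 := by
  simp only [gaussWeight, ← Finset.sum_div]
  exact div_self (sum_mul_exp_pos hd μ).ne'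

lemma gaussWeight_mul_gaussPDF_one [DecidableEq m] (d : ι → ℝ) (μ : ι → m → ℝ) (x : m → ℝ)
    (z : ι) :
    gaussWeight d μ z * gaussPDF (μ z) 1 x =
      gaussPDF 0 1 x / (∑ ζ, d ζ * Real.exp (μ ζ ⬝ᵥ μ ζ / 2)) * (d z * Real.exp (x ⬝ᵥ μ z)) := by
  rw [gaussPDF_one_eq, gaussWeight, Real.exp_sub]
  field_simp

lemma gaussian_network_eq_expSum_div [DecidableEq m] [Nonempty ι] (hd : ∀ z, 0 < d z)
    (b : ι → ℝ) (μ : ι → m → ℝ) (x : m → ℝ) :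
    ∑ z, (gaussWeight d μ z * gaussPDF (μ z) 1 x /
        ∑ ζ, gaussWeight d μ ζ * gaussPDF (μ ζ) 1 x) * (b z / d z) =
      expSum b μ x / expSum d μ x := by
  rw [sum_div_sum_mul_of_eq_mul _ (gaussWeight_mul_gaussPDF_one d μ x)]
  · congr 1
    exact Finset.sum_congr rfl fun z _ => by field_simp [(hd z).ne']
  · exact div_ne_zero (gaussPDF_pos 0 (by simp) x).ne' (sum_mul_exp_pos hd μ).ne'

end Gaussian

theorem normalized_gaussian_rbf_dense_general {p : ℕ}
    (𝕏 : Set (Fin p → ℝ)) (hX : IsCompact 𝕏)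
    (u : (Fin p → ℝ) → ℝ) (hu : ContinuousOn u 𝕏) (ε : ℝ) (hε : 0 < ε) :
    ∃ (n : ℕ) (π : Fin n → ℝ) (μ : Fin n → Fin p → ℝ)
      (S : Fin n → Matrix (Fin p) (Fin p) ℝ) (a : Fin n → ℝ),
      0 < n ∧ (∀ z, 0 < π z) ∧ (∑ z, π z = 1) ∧ (∀ z, (S z).PosDef) ∧
      (⨆ x : 𝕏, |u x - ∑ z, ((π z * gaussPDF (μ z) (S z) x) /
          (∑ ζ, π ζ * gaussPDF (μ ζ) (S ζ) x)) * a z|) < ε := by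
  have : CompactSpace 𝕏 := isCompact_iff_compactSpace.mp hX
  let f : C(𝕏, ℝ) := ⟨𝕏.domRestrict u, hu.domRestrict⟩
  obtain ⟨⟨g, hg⟩, hgf⟩ := ContinuousMap.exists_mem_subalgebra_near_continuousMap_of_separatesPoints
    (expRatioSubalgebra 𝕏) expRatioSubalgebra_separatesPoints f ε hε
  obtain ⟨n, b, d, μ, hn, hd, hg⟩ := IsExpRatio.exists_fin hg
  have : Nonempty (Fin n) := ⟨⟨0, hn⟩⟩
  refine ⟨n, gaussWeight d μ, μ, fun _ => 1, fun z => b z / d z, hn, gaussWeight_pos hd μ,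
    sum_gaussWeight hd μ, fun _ => PosDef.one, ?_⟩
  refine lt_of_le_of_lt (Real.iSup_le (fun x => ?_) (norm_nonneg _)) hgf
  rw [gaussian_network_eq_expSum_div hd, ← hg x, abs_sub_comm]
  exact ContinuousMap.norm_coe_le_norm (g - f) x

theorem normalized_gaussian_rbf_dense {p : ℕ}
    (𝕏 : Set (Fin p → ℝ)) (hX : IsCompact 𝕏) (hXne : 𝕏.Nonempty)
    (u : (Fin p → ℝ) → ℝ) (hu : ContinuousOn u 𝕏) (ε : ℝ) (hε : 0 < ε) :
    ∃ (n : ℕ) (π : Fin n → ℝ) (μ : Fin n → Fin p → ℝ)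
      (S : Fin n → Matrix (Fin p) (Fin p) ℝ) (a : Fin n → ℝ),
      0 < n ∧ (∀ z, 0 < π z) ∧ (∑ z, π z = 1) ∧ (∀ z, (S z).PosDef) ∧
      (⨆ x : 𝕏, |u x - ∑ z, ((π z * gaussPDF (μ z) (S z) x) /
          (∑ ζ, π ζ * gaussPDF (μ ζ) (S ζ) x)) * a z|) < ε :=
  normalized_gaussian_rbf_dense_general 𝕏 hX u hu ε hε
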